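/- Suppose the data (ρ̄, I, J) satisfies condition (★). Then for all symmetric real n×n matrices C and D, letting Y be the 2n×2n block matrix [[C, D],[D, -C]] (with respect to the coordinates (x₁,…,xₙ,y₁,…,yₙ)), one has ∫_{S^{2n-1}} Σ_{ℓ=1}^{k} ρ_ℓ ⟨π_ℓ u, Y² u⟩ / ‖π_ℓ u‖ dσ(u) ≥ 0, where the integrand is defined σ-almost everywhere. -/

import Mathlib

open MeasureTheory Metric Matrix Pointwise

noncomputable section

/-- The rotation-invariant probability measure on the unit sphere of a Euclidean space. -/
noncomputable def sphereProb (ι : Type*) [Fintype ι] :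
    Measure (sphere (0 : EuclideanSpace ℝ ι) 1) :=
  ((volume : Measure (EuclideanSpace ℝ ι)).toSphere Set.univ)⁻¹ •
    (volume : Measure (EuclideanSpace ℝ ι)).toSphere

/-- Support function of a set: `h_X(u) = sup_{x ∈ X} ⟨x, u⟩`. -/
noncomputable def suppFn {ι : Type*} [Fintype ι] (X : Set (EuclideanSpace ℝ ι))
    (u : EuclideanSpace ℝ ι) : ℝ :=
  sSup ((fun x => (inner ℝ x u : ℝ)) '' X)

/-- Mean width: `M(X) = ∫_{S^{d-1}} (h_X(u) + h_X(-u)) dσ(u)`. -/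
noncomputable def meanWidth {ι : Type*} [Fintype ι] (X : Set (EuclideanSpace ℝ ι)) : ℝ :=
  ∫ u : sphere (0 : EuclideanSpace ℝ ι) 1,
    (suppFn X (u : EuclideanSpace ℝ ι) + suppFn X (-(u : EuclideanSpace ℝ ι))) ∂(sphereProb ι)

/-- A convex body: compact, convex, with nonempty interior. -/
def IsConvexBody {ι : Type*} [Fintype ι] (K : Set (EuclideanSpace ℝ ι)) : Prop :=
  IsCompact K ∧ Convex ℝ K ∧ (interior K).Nonempty

/-- `ℝ^{2n}` with coordinates `(x₁,…,xₙ,y₁,…,yₙ)`: the `xᵢ` are indexed by `Sum.inl i`,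
the `yⱼ` by `Sum.inr j`. -/
abbrev Esp (n : ℕ) := EuclideanSpace ℝ (Fin n ⊕ Fin n)

/-- The standard symplectic matrix `J = [[0, Iₙ],[-Iₙ, 0]]`. -/
def Jmat (n : ℕ) : Matrix (Fin n ⊕ Fin n) (Fin n ⊕ Fin n) ℝ :=
  Matrix.fromBlocks 0 1 (-1) 0

/-- Membership in `Sp(2n)`: `Pᵀ J P = J`. -/
def IsSymplecticMat {n : ℕ} (P : Matrix (Fin n ⊕ Fin n) (Fin n ⊕ Fin n) ℝ) : Prop :=
  Pᵀ * Jmat n * P = Jmat n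

/-- Action of a `2n × 2n` matrix on `ℝ^{2n}`. -/
noncomputable def matAct {n : ℕ} (P : Matrix (Fin n ⊕ Fin n) (Fin n ⊕ Fin n) ℝ) :
    Esp n → Esp n :=
  Matrix.toEuclideanLin P

/-- The standard symplectic form `ω₀ = Σᵢ dxᵢ ∧ dyᵢ` on `ℝ^{2n}`. -/
def stdSymplForm {n : ℕ} (u v : Esp n) : ℝ :=
  ∑ j : Fin n, (u (Sum.inl j) * v (Sum.inr j) - u (Sum.inr j) * v (Sum.inl j))

/-- A symplectomorphism of `ℝ^{2n}`: a smooth diffeomorphism whose differential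
preserves the standard symplectic form `ω₀`. -/
def IsSymplectomorphism {n : ℕ} (f : Esp n → Esp n) : Prop :=
  ContDiff ℝ (⊤ : ℕ∞) f ∧
  (∃ g : Esp n → Esp n, ContDiff ℝ (⊤ : ℕ∞) g ∧
      Function.LeftInverse g f ∧ Function.RightInverse g f) ∧
  ∀ x u v, stdSymplForm (fderiv ℝ f x u) (fderiv ℝ f x v) = stdSymplForm u v

/-- The torus action `(θ₁,…,θₙ)·(z₁,…,zₙ) = (e^{iθ₁}z₁,…,e^{iθₙ}zₙ)` on `ℝ^{2n} = ℂⁿ`,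
`z_j = x_j + i y_j`. -/
def torusAct {n : ℕ} (θ : Fin n → ℝ) (u : Esp n) : Esp n :=
  (WithLp.equiv 2 _).symm <| Sum.elim
    (fun j => Real.cos (θ j) * u (Sum.inl j) - Real.sin (θ j) * u (Sum.inr j))
    (fun j => Real.sin (θ j) * u (Sum.inl j) + Real.cos (θ j) * u (Sum.inr j))

/-- A toric subset of `ℝ^{2n}`: one invariant under the standard torus action. -/
def IsToric {n : ℕ} (X : Set (Esp n)) : Prop :=
  ∀ θ : Fin n → ℝ, torusAct θ '' X = X

/-- The `ℝ`-linear action of a complex `n × n` matrix on `ℝ^{2n} = ℂⁿ`, via `z_j = x_j + i y_j`. -/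
def unitaryAct {n : ℕ} (Q : Matrix (Fin n) (Fin n) ℂ) (u : Esp n) : Esp n :=
  (WithLp.equiv 2 _).symm <| Sum.elim
    (fun j => (Q.mulVec (fun m => Complex.mk (u (Sum.inl m)) (u (Sum.inr m))) j).re)
    (fun j => (Q.mulVec (fun m => Complex.mk (u (Sum.inl m)) (u (Sum.inr m))) j).im)

/-- Orthogonal projection of Euclidean space onto the span of the coordinate
vectors indexed by `A`. -/
def coordProj {ι : Type*} [Fintype ι] [DecidableEq ι] (A : Finset ι)
    (u : EuclideanSpace ℝ ι) : EuclideanSpace ℝ ι :=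
  (WithLp.equiv 2 _).symm fun i => if i ∈ A then u i else 0

/-- The index set of `V_ℓ = span({e_i : i ∈ I_ℓ} ∪ {f_j : j ∈ J_ℓ})` inside `Fin n ⊕ Fin n`. -/
def sumIdx {n k : ℕ} (I J : Fin k → Finset (Fin n)) (ℓ : Fin k) : Finset (Fin n ⊕ Fin n) :=
  (I ℓ).image Sum.inl ∪ (J ℓ).image Sum.inr

/-- The product of balls `𝒫(ρ̄, I, J) = ρ₁B^{m₁} × ⋯ × ρ_k B^{m_k}`:
all sums `v₁ + ⋯ + v_k` where `v_ℓ` lies in the closed ball of radius `ρ_ℓ` in `V_ℓ`. -/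
def prodBalls {n k : ℕ} (ρ : Fin k → ℝ) (I J : Fin k → Finset (Fin n)) : Set (Esp n) :=
  {v | ∃ w : Fin k → Esp n, v = ∑ ℓ, w ℓ ∧
    ∀ ℓ, (∀ i, i ∉ sumIdx I J ℓ → w ℓ i = 0) ∧ ‖w ℓ‖ ≤ ρ ℓ}

/-- The data `(ρ̄, I, J)` is admissible: radii positive, `I` and `J` are partitions of
`{1,…,n}` into pairwise disjoint (possibly empty) subsets, and for each `ℓ` at most one
of `I_ℓ`, `J_ℓ` is empty. -/
def AdmissibleData {n k : ℕ} (ρ : Fin k → ℝ) (I J : Fin k → Finset (Fin n)) : Prop :=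
  (∀ ℓ, 0 < ρ ℓ) ∧
  (∀ ℓ ℓ', ℓ ≠ ℓ' → Disjoint (I ℓ) (I ℓ')) ∧ (∀ i, ∃ ℓ, i ∈ I ℓ) ∧
  (∀ ℓ ℓ', ℓ ≠ ℓ' → Disjoint (J ℓ) (J ℓ')) ∧ (∀ i, ∃ ℓ, i ∈ J ℓ) ∧
  (∀ ℓ, (I ℓ).Nonempty ∨ (J ℓ).Nonempty)

/-- Condition (★): if `I_ℓ ∩ J_{ℓ'} ≠ ∅` then `|I_ℓ|+|J_ℓ| = |I_{ℓ'}|+|J_{ℓ'}|`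
and `ρ_ℓ = ρ_{ℓ'}`. -/
def StarCond {n k : ℕ} (ρ : Fin k → ℝ) (I J : Fin k → Finset (Fin n)) : Prop :=
  ∀ ℓ ℓ', ((I ℓ) ∩ (J ℓ')).Nonempty →
    (I ℓ).card + (J ℓ).card = (I ℓ').card + (J ℓ').card ∧ ρ ℓ = ρ ℓ'


section Aux

open MeasureTheory Metric Matrix Pointwise

variable {ι : Type*} [Fintype ι]

/-- The restriction of a linear isometry equivalence to the unit sphere. -/
noncomputable def sphMap (e : EuclideanSpace ℝ ι ≃ₗᵢ[ℝ] EuclideanSpace ℝ ι)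
    (x : sphere (0 : EuclideanSpace ℝ ι) 1) : sphere (0 : EuclideanSpace ℝ ι) 1 :=
  ⟨e x, by
    rw [mem_sphere_zero_iff_norm, e.norm_map]
    exact mem_sphere_zero_iff_norm.mp x.2⟩

lemma sphMap_continuous (e : EuclideanSpace ℝ ι ≃ₗᵢ[ℝ] EuclideanSpace ℝ ι) :
    Continuous (sphMap e) :=
  Continuous.subtype_mk (e.continuous.comp continuous_subtype_val) _

lemma map_sphMap_toSphere (e : EuclideanSpace ℝ ι ≃ₗᵢ[ℝ] EuclideanSpace ℝ ι) :
    Measure.map (sphMap e) (volume : Measure (EuclideanSpace ℝ ι)).toSphere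
      = (volume : Measure (EuclideanSpace ℝ ι)).toSphere := by
  have hme : Measurable (sphMap e) := (sphMap_continuous e).measurable
  ext s hs
  rw [Measure.map_apply hme hs, Measure.toSphere_apply' _ (hme hs),
    Measure.toSphere_apply' _ hs]
  congr 1
  have h1 : (Subtype.val '' (sphMap e ⁻¹' s) : Set (EuclideanSpace ℝ ι))
      = ⇑e ⁻¹' (Subtype.val '' s) := by
    ext v
    constructor
    · rintro ⟨x, hx, rfl⟩
      exact ⟨sphMap e x, hx, rfl⟩
    · rintro ⟨y, hy, hey⟩
      have hv : v ∈ sphere (0 : EuclideanSpace ℝ ι) 1 := by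
        rw [mem_sphere_zero_iff_norm, ← e.norm_map, ← hey]
        exact mem_sphere_zero_iff_norm.mp y.2
      refine ⟨⟨v, hv⟩, ?_, rfl⟩
      have : sphMap e ⟨v, hv⟩ = y := Subtype.ext hey.symm
      rw [Set.mem_preimage, this]; exact hy
  have h2 : Set.Ioo (0:ℝ) 1 • (⇑e ⁻¹' (Subtype.val '' s))
      = ⇑e ⁻¹' (Set.Ioo (0:ℝ) 1 • (Subtype.val '' s)) := by
    ext v
    constructor
    · rintro ⟨r, hr, w, hw, rfl⟩
      exact ⟨r, hr, e w, hw, (e.map_smul r w).symm⟩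
    · rintro ⟨r, hr, w, hw, hrw⟩
      refine ⟨r, hr, e.symm w, by simpa using hw, ?_⟩
      have := congrArg e.symm hrw
      simpa [e.symm.map_smul, eq_comm] using this.symm
  rw [h1, h2]
  have hmapeq := e.measurePreserving.map_eq
  calc volume (⇑e ⁻¹' (Set.Ioo (0:ℝ) 1 • (Subtype.val '' s)))
      = Measure.map (⇑e) volume (Set.Ioo (0:ℝ) 1 • (Subtype.val '' s)) := by
        rw [show (⇑e : EuclideanSpace ℝ ι → EuclideanSpace ℝ ι)
            = ⇑(e.toHomeomorph.toMeasurableEquiv) from rfl,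
          MeasurableEquiv.map_apply]
    _ = _ := by rw [hmapeq]

lemma map_sphMap_sphereProb (e : EuclideanSpace ℝ ι ≃ₗᵢ[ℝ] EuclideanSpace ℝ ι) :
    Measure.map (sphMap e) (sphereProb ι) = sphereProb ι := by
  rw [sphereProb, Measure.map_smul, map_sphMap_toSphere]

lemma isFiniteMeasure_sphereProb : IsFiniteMeasure (sphereProb ι) := by
  constructor
  rw [sphereProb, Measure.smul_apply, smul_eq_mul]
  set a := (volume : Measure (EuclideanSpace ℝ ι)).toSphere Set.univ with ha
  have : a⁻¹ * a ≤ 1 := by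
    rcases eq_or_ne a 0 with h | h
    · simp [h]
    · rcases eq_or_ne a ⊤ with h' | h'
      · simp [h']
      · rw [ENNReal.inv_mul_cancel h h']
  exact lt_of_le_of_lt this ENNReal.one_lt_top

variable [DecidableEq ι]

/-- The reflection fixing coordinates in `A` and negating the others. -/
noncomputable def reflA (A : Finset ι) : EuclideanSpace ℝ ι ≃ₗᵢ[ℝ] EuclideanSpace ℝ ι :=
  LinearIsometryEquiv.piLpCongrRight 2
    (fun i => if i ∈ A then LinearIsometryEquiv.refl ℝ ℝ else .neg ℝ)

lemma reflA_apply (A : Finset ι) (u : EuclideanSpace ℝ ι) (i : ι) :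
    reflA A u i = if i ∈ A then u i else -u i := by
  simp [reflA, LinearIsometryEquiv.piLpCongrRight]
  split <;> simp

lemma coordProj_apply' (A : Finset ι) (u : EuclideanSpace ℝ ι) (i : ι) :
    coordProj A u i = if i ∈ A then u i else 0 := rfl

lemma coordProj_reflA (A : Finset ι) (u : EuclideanSpace ℝ ι) :
    coordProj A (reflA A u) = coordProj A u := by
  ext i
  simp only [coordProj_apply', reflA_apply]
  split <;> simp_all

lemma reflA_eq (A : Finset ι) (u : EuclideanSpace ℝ ι) :
    reflA A u = (2:ℝ) • coordProj A u - u := by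
  ext i
  have h1 : ((2:ℝ) • coordProj A u - u) i = 2 * coordProj A u i - u i := rfl
  rw [reflA_apply, h1, coordProj_apply']
  split <;> ring

lemma isLinearMap_coordProj (A : Finset ι) :
    IsLinearMap ℝ (coordProj A : EuclideanSpace ℝ ι → EuclideanSpace ℝ ι) := by
  constructor
  · intro u v; ext i
    have h0 : (u + v) i = u i + v i := rfl
    have h1 : (coordProj A u + coordProj A v) i = coordProj A u i + coordProj A v i := rfl
    simp only [coordProj_apply', h0, h1, coordProj_apply']
    split <;> simp
  · intro c u; ext i
    have h1 : (c • u) i = c * u i := rfl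
    have h2 : (c • coordProj A u) i = c * coordProj A u i := rfl
    simp only [coordProj_apply', h1, h2]
    split <;> simp

lemma continuous_coordProj (A : Finset ι) :
    Continuous (coordProj A : EuclideanSpace ℝ ι → EuclideanSpace ℝ ι) :=
  ((isLinearMap_coordProj A).mk' _).continuous_of_finiteDimensional

lemma key_nonneg {m : Type*} [Fintype m] [DecidableEq m] (Y : Matrix m m ℝ) (hY : Yᵀ = Y)
    (p : EuclideanSpace ℝ m) : 0 ≤ (inner ℝ p (Matrix.toEuclideanLin (Y*Y) p) : ℝ) := by
  rw [Matrix.toEuclideanLin_apply]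
  set v : m → ℝ := WithLp.equiv 2 _ p with hv
  have h1 : (inner ℝ p ((WithLp.equiv 2 (m → ℝ)).symm ((Y*Y).mulVec v)) : ℝ)
      = dotProduct v ((Y*Y).mulVec v) := by
    simp [PiLp.inner_apply, dotProduct, RCLike.inner_apply]
    exact Finset.sum_congr rfl fun i _ => mul_comm _ _
  rw [show (inner ℝ p (WithLp.toLp 2 ((Y * Y) *ᵥ p.ofLp)) : ℝ) = dotProduct v ((Y*Y).mulVec v) from h1, ← Matrix.mulVec_mulVec, Matrix.dotProduct_mulVec, ← hY, Matrix.vecMul_transpose, hY]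
  exact Finset.sum_nonneg fun i _ => mul_self_nonneg _

/-- The summand function on the sphere. -/
noncomputable def gfun (r : ℝ) (A : Finset ι) (M : Matrix ι ι ℝ)
    (u : sphere (0 : EuclideanSpace ℝ ι) 1) : ℝ :=
  r * (inner ℝ (coordProj A (u : EuclideanSpace ℝ ι))
      (Matrix.toEuclideanLin M (u : EuclideanSpace ℝ ι)) : ℝ) /
    ‖coordProj A (u : EuclideanSpace ℝ ι)‖

lemma gfun_measurable (r : ℝ) (A : Finset ι) (M : Matrix ι ι ℝ) :
    Measurable (gfun r A M) := by
  have hT : Continuous (Matrix.toEuclideanLin M :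
      EuclideanSpace ℝ ι → EuclideanSpace ℝ ι) :=
    (Matrix.toEuclideanLin M).continuous_of_finiteDimensional
  have hcp := continuous_coordProj A
  have hnum : Continuous fun u : sphere (0 : EuclideanSpace ℝ ι) 1 =>
      r * (inner ℝ (coordProj A (u : EuclideanSpace ℝ ι))
        (Matrix.toEuclideanLin M (u : EuclideanSpace ℝ ι)) : ℝ) :=
    continuous_const.mul (Continuous.inner (hcp.comp continuous_subtype_val)
      (hT.comp continuous_subtype_val))
  have hden : Continuous fun u : sphere (0 : EuclideanSpace ℝ ι) 1 =>
      ‖coordProj A (u : EuclideanSpace ℝ ι)‖ :=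
    (hcp.comp continuous_subtype_val).norm
  exact hnum.measurable.div hden.measurable

lemma gfun_bound (r : ℝ) (A : Finset ι) (M : Matrix ι ι ℝ)
    (u : sphere (0 : EuclideanSpace ℝ ι) 1) :
    |gfun r A M u|
      ≤ |r| * ‖LinearMap.toContinuousLinearMap (Matrix.toEuclideanLin M)‖ := by
  set T := LinearMap.toContinuousLinearMap (Matrix.toEuclideanLin M) with hT
  set p := coordProj A (u : EuclideanSpace ℝ ι) with hp
  set w : EuclideanSpace ℝ ι := Matrix.toEuclideanLin M (u : EuclideanSpace ℝ ι) with hw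
  have hwT : w = T (u : EuclideanSpace ℝ ι) := rfl
  have hwb : ‖w‖ ≤ ‖T‖ := by
    rw [hwT]
    calc ‖T (u : EuclideanSpace ℝ ι)‖ ≤ ‖T‖ * ‖(u : EuclideanSpace ℝ ι)‖ := T.le_opNorm _
      _ = ‖T‖ := by rw [mem_sphere_zero_iff_norm.mp u.2, mul_one]
  have habs : |gfun r A M u| = |r| * |(inner ℝ p w : ℝ)| / ‖p‖ := by
    rw [gfun, abs_div, abs_mul, abs_norm]
  rw [habs]
  rcases eq_or_ne p 0 with h0 | h0
  · rw [h0]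
    simp only [inner_zero_left, abs_zero, mul_zero, zero_div]
    exact mul_nonneg (abs_nonneg r) (norm_nonneg _)
  · have hpn : 0 < ‖p‖ := norm_pos_iff.mpr h0
    rw [div_le_iff₀ hpn]
    calc |r| * |(inner ℝ p w : ℝ)| ≤ |r| * (‖p‖ * ‖w‖) := by
          exact mul_le_mul_of_nonneg_left (abs_real_inner_le_norm p w) (abs_nonneg r)
      _ ≤ |r| * (‖p‖ * ‖T‖) := by
          refine mul_le_mul_of_nonneg_left ?_ (abs_nonneg r)
          exact mul_le_mul_of_nonneg_left hwb (norm_nonneg p)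
      _ = |r| * ‖T‖ * ‖p‖ := by ring

lemma gfun_integrable (r : ℝ) (A : Finset ι) (M : Matrix ι ι ℝ) :
    Integrable (gfun r A M) (sphereProb ι) := by
  haveI := isFiniteMeasure_sphereProb (ι := ι)
  refine Integrable.mono' (integrable_const
    (|r| * ‖LinearMap.toContinuousLinearMap (Matrix.toEuclideanLin M)‖))
    (gfun_measurable r A M).aestronglyMeasurable ?_
  exact ae_of_all _ fun u => gfun_bound r A M u

lemma gfun_symm_nonneg (r : ℝ) (hr : 0 ≤ r) (A : Finset ι) (Y : Matrix ι ι ℝ) (hY : Yᵀ = Y)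
    (u : sphere (0 : EuclideanSpace ℝ ι) 1) :
    0 ≤ gfun r A (Y*Y) u + gfun r A (Y*Y) (sphMap (reflA A) u) := by
  set T := Matrix.toEuclideanLin (Y*Y) with hTdef
  set p := coordProj A (u : EuclideanSpace ℝ ι) with hp
  have hcoe : ((sphMap (reflA A) u : sphere (0 : EuclideanSpace ℝ ι) 1) :
      EuclideanSpace ℝ ι) = reflA A (u : EuclideanSpace ℝ ι) := rfl
  have hkey : gfun r A (Y*Y) u + gfun r A (Y*Y) (sphMap (reflA A) u)
      = r * (2 * (inner ℝ p (T p) : ℝ)) / ‖p‖ := by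
    rw [gfun, gfun, hcoe, coordProj_reflA, ← hp, ← add_div]
    congr 1
    rw [← mul_add]
    congr 1
    have : (inner ℝ p (T (reflA A (u : EuclideanSpace ℝ ι))) : ℝ)
        = 2 * (inner ℝ p (T p) : ℝ) - (inner ℝ p (T (u : EuclideanSpace ℝ ι)) : ℝ) := by
      rw [reflA_eq A (u : EuclideanSpace ℝ ι), ← hp, map_sub, LinearMap.map_smul,
        inner_sub_right, real_inner_smul_right]
    rw [this]; ring
  rw [hkey]
  have := key_nonneg Y hY p
  positivity

lemma integral_gfun_nonneg (r : ℝ) (hr : 0 ≤ r) (A : Finset ι) (Y : Matrix ι ι ℝ)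
    (hY : Yᵀ = Y) : 0 ≤ ∫ u, gfun r A (Y*Y) u ∂(sphereProb ι) := by
  haveI := isFiniteMeasure_sphereProb (ι := ι)
  set e := reflA A
  set g := gfun r A (Y*Y) with hg
  have hint : Integrable g (sphereProb ι) := gfun_integrable _ _ _
  have hint2 : Integrable (fun u => g (sphMap e u)) (sphereProb ι) := by
    refine Integrable.mono' (integrable_const
      (|r| * ‖LinearMap.toContinuousLinearMap (Matrix.toEuclideanLin (Y*Y))‖))
      ((gfun_measurable r A (Y*Y)).comp (sphMap_continuous e).measurable).aestronglyMeasurable ?_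
    exact ae_of_all _ fun u => gfun_bound r A (Y*Y) (sphMap e u)
  have heq : ∫ u, g (sphMap e u) ∂(sphereProb ι) = ∫ u, g u ∂(sphereProb ι) := by
    conv_rhs => rw [← map_sphMap_sphereProb e]
    rw [integral_map (sphMap_continuous e).measurable.aemeasurable]
    rw [map_sphMap_sphereProb e]
    exact hint.aestronglyMeasurable
  have hsum : 0 ≤ ∫ u, (g u + g (sphMap e u)) ∂(sphereProb ι) :=
    integral_nonneg fun u => gfun_symm_nonneg r hr A Y hY u
  rw [integral_add hint hint2, heq] at hsum
  linarith

end Aux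

/-- under condition (★), for every matrix `Y = [[C, D],[D, -C]]` with `C, D`
symmetric, `∫_{S^{2n-1}} Σ_ℓ ρ_ℓ ⟨π_ℓ u, Y² u⟩ / ‖π_ℓ u‖ dσ(u) ≥ 0`. -/
theorem stmt_16 {n k : ℕ} (ρ : Fin k → ℝ) (I J : Fin k → Finset (Fin n))
    (hadm : AdmissibleData ρ I J) (hstar : StarCond ρ I J)
    (C D : Matrix (Fin n) (Fin n) ℝ) (hC : C.IsSymm) (hD : D.IsSymm) :
    0 ≤ ∫ u : sphere (0 : Esp n) 1,
        (∑ ℓ, ρ ℓ *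
          (inner ℝ (coordProj (sumIdx I J ℓ) (u : Esp n))
              (matAct (Matrix.fromBlocks C D D (-C) * Matrix.fromBlocks C D D (-C))
                (u : Esp n)) : ℝ) /
            ‖coordProj (sumIdx I J ℓ) (u : Esp n)‖)
        ∂(sphereProb (Fin n ⊕ Fin n)) := by
  set Y := Matrix.fromBlocks C D D (-C) with hYdef
  have hY : Yᵀ = Y := by
    rw [hYdef, Matrix.fromBlocks_transpose, Matrix.transpose_neg, hC.eq, hD.eq]
  have hrfl : (∫ u : sphere (0 : Esp n) 1,
        (∑ ℓ, ρ ℓ *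
          (inner ℝ (coordProj (sumIdx I J ℓ) (u : Esp n))
              (matAct (Y * Y) (u : Esp n)) : ℝ) /
            ‖coordProj (sumIdx I J ℓ) (u : Esp n)‖)
        ∂(sphereProb (Fin n ⊕ Fin n)))
      = ∫ u : sphere (0 : Esp n) 1,
          (∑ ℓ, gfun (ρ ℓ) (sumIdx I J ℓ) (Y * Y) u) ∂(sphereProb (Fin n ⊕ Fin n)) := rfl
  rw [hrfl, integral_finset_sum _ (fun ℓ _ => gfun_integrable _ _ _)]
  exact Finset.sum_nonneg fun ℓ _ =>
    integral_gfun_nonneg (ρ ℓ) (hadm.1 ℓ).le (sumIdx I J ℓ) Y hY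

end
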